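/- Mixture KL decomposition used in CADD (Lemma on exact split): let the true posterior over {unmask to x₀, stay masked} have weights (ρ^flip, ρ^keep) with continuous component exactly matched in the unmask branch, and let the model posterior have weights (ρ^flip · p_θ(x₀), ρ^keep) on the corresponding branches with continuous Gaussians in the keep branch. Then KL(q ‖ p_θ) = ρ^flip · (−log p_θ(x₀)) + ρ^keep · KL_cont, where KL_cont is the KL between the keep-branch continuous components. -/
import Mathlib


/-- Mixture KL decomposition (CADD exact split), discretized: `q` puts mass `ρf` on the
flip branch with point component `δ_{z₀}` and mass `ρk` on the keep branch with
distribution `μ`; `p_θ` puts mass `ρf·p` on the flip branch with component `δ_{z₀}`,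
mass `ρf·(1-p)` on flip components singular to `δ_{z₀}` (`ν' z₀ = 0`), and mass `ρk` on
the keep branch with distribution `ν`. Then
`KL(q ‖ p_θ) = ρf · (−log p) + ρk · KL(μ ‖ ν)`. -/
theorem cadd_mixture_kl_split {S : Type*} [Fintype S] [DecidableEq S] (z₀ : S)
    (ρf ρk p : ℝ) (μ ν ν' : S → ℝ)
    (hρf : 0 ≤ ρf) (hρk : 0 ≤ ρk) (hρsum : ρf + ρk = 1)
    (hp0 : 0 < p) (hp1 : p ≤ 1)
    (hμ0 : ∀ s, 0 ≤ μ s) (hμ1 : ∑ s, μ s = 1)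
    (hν0 : ∀ s, 0 ≤ ν s) (hν1 : ∑ s, ν s = 1)
    (hν'0 : ∀ s, 0 ≤ ν' s) (hν'1 : ∑ s, ν' s = 1)
    (hsing : ν' z₀ = 0)
    (hpos : ∀ s, 0 < μ s → 0 < ν s) :
    ∑ x : Bool × S,
        (if x.1 then ρf * (if x.2 = z₀ then 1 else 0) else ρk * μ x.2) *
          Real.log ((if x.1 then ρf * (if x.2 = z₀ then 1 else 0) else ρk * μ x.2) /
            (if x.1 then ρf * (p * (if x.2 = z₀ then 1 else 0) + (1 - p) * ν' x.2)
              else ρk * ν x.2))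
      = ρf * (-Real.log p) + ρk * ∑ s, μ s * Real.log (μ s / ν s) := by
  rw [Fintype.sum_prod_type, Fintype.sum_bool]
  simp only [Bool.false_eq_true, eq_self_iff_true, if_true, if_false]
  have htrue : ∑ s : S, ρf * (if s = z₀ then 1 else 0) *
      Real.log (ρf * (if s = z₀ then 1 else 0) /
        (ρf * (p * (if s = z₀ then 1 else 0) + (1 - p) * ν' s)))
      = ρf * (-Real.log p) := by
    rw [Finset.sum_eq_single z₀]
    · simp only [eq_self_iff_true, if_true, hsing, mul_one, mul_zero, add_zero]
      rcases eq_or_lt_of_le hρf with h | h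
      · simp [← h]
      · have hq : ρf / (ρf * p) = p⁻¹ := by field_simp
        rw [hq, Real.log_inv]
    · intro s _ hs
      simp [if_neg hs]
    · intro h; exact absurd (Finset.mem_univ z₀) h
  have hfalse : ∑ s : S, ρk * μ s * Real.log (ρk * μ s / (ρk * ν s))
      = ρk * ∑ s, μ s * Real.log (μ s / ν s) := by
    rw [Finset.mul_sum]
    apply Finset.sum_congr rfl
    intro s _
    rcases eq_or_lt_of_le (hμ0 s) with h | h
    · simp [← h]
    · rcases eq_or_lt_of_le hρk with hk | hk
      · simp [← hk]
      · rw [mul_div_mul_left _ _ (ne_of_gt hk), mul_assoc]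
  rw [htrue, hfalse]
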